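/- arXiv:1401.1920 — 3 statements merged into one kernel-verified Lean document; each statement's English description precedes it below -/
import Mathlib

section
/- If 2 ≤ α ≤ β < s(σ) and n ≥ (β-α+1)⌊(s(σ)-1)/(α-1)⌋ + s(σ), then H(n,r,q|σ) has no (α,β)-colouring in which all classes are monochromatic. -/
open Finset

/-- `K` is an edge of the σ-hypergraph `H(n,r,q | σ)`: the multiset of non-zero
cardinalities of the intersections of `K` with the `n` classes equals `σ`. -/
def sigmaEdge (n q : ℕ) (σ : Multiset ℕ) (K : Finset (Fin n × Fin q)) : Prop :=
  (((Finset.univ : Finset (Fin n)).val.map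
      fun i => (K.filter fun v => v.1 = i).card).filter fun m => m ≠ 0) = σ

/-- `c` is an `(α,β)`-colouring: every edge contains at least `α` and at most `β` colours. -/
def isABColouring (n q : ℕ) (σ : Multiset ℕ) (α β : ℕ) (c : Fin n × Fin q → ℕ) : Prop :=
  ∀ K : Finset (Fin n × Fin q), sigmaEdge n q σ K →
    α ≤ (K.image c).card ∧ (K.image c).card ≤ β

/-- `c` uses exactly `k` colours. -/
def usesExactly (n q k : ℕ) (c : Fin n × Fin q → ℕ) : Prop :=
  ((Finset.univ : Finset (Fin n × Fin q)).image c).card = k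

/-- every class of the σ-hypergraph is monochromatic under `c`. -/
def classesMonochromatic (n q : ℕ) (c : Fin n × Fin q → ℕ) : Prop :=
  ∀ v w : Fin n × Fin q, v.1 = w.1 → c v = c w

/-- `σ` is a partition of `r` (a multiset of positive integers summing to `r`). -/
def IsPartitionOf (σ : Multiset ℕ) (r : ℕ) : Prop := σ.sum = r ∧ 0 ∉ σ

/-!
With every class monochromatic, a colouring is just a colouring `f` of the `n` classes, and every
set of `s = s(σ)` classes is the set of classes met by some edge; so every `s`-set of classes sees
between `α` and `β` colours under `f`. Then any fewer than `α` colours are used on fewer than `s`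
classes in total, hence with `m = ⌊(s-1)/(α-1)⌋` at most `α - 2` colours are used more than `m`
times. Completing those to `α - 1` of the at most `β` colours, the remaining at most `β - α + 1`
colours are each used at most `m` times, which gives `n < (β - α + 1) m + s`.
-/

namespace Finset

variable {ι γ : Type*} [Fintype ι] [DecidableEq γ] (f : ι → γ) {s α β : ℕ}

lemma sum_card_fiber_lt_of_card_lt (hlow : ∀ S : Finset ι, #S = s → α ≤ #(S.image f))
    {W : Finset γ} (hW : #W < α) : ∑ w ∈ W, #{i | f i = w} < s := by
  by_contra! hs
  rw [sum_card_fiberwise_eq_card_filter] at hs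
  obtain ⟨S, hSW, hS⟩ := exists_subset_card_eq hs
  have hSW' : S.image f ⊆ W := image_subset_iff.2 fun i hi => (mem_filter.1 (hSW hi)).2
  have := hlow S hS
  have := card_le_card hSW'
  omega

lemma card_image_univ_le (hupp : ∀ S : Finset ι, #S = s → #(S.image f) ≤ β)
    (hβs : β < s) (hs : s ≤ Fintype.card ι) : #(univ.image f) ≤ β := by
  by_contra! hβ
  obtain ⟨U, hUT, hU⟩ := exists_subset_card_eq (Nat.succ_le_of_lt hβ)
  obtain ⟨R, -, hRinj, hRU⟩ := exists_subset_injOn_image_eq_of_surjOn (Set.univ : Set ι) U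
    fun w hw => by simpa using hUT hw
  have hR : #R = β + 1 := by rw [← card_image_of_injOn hRinj, hRU, hU]
  obtain ⟨S, hRS, -, hS⟩ := exists_subsuperset_card_eq (subset_univ R) (by omega) hs
  have := card_le_card (hRU ▸ image_subset_image hRS : U ⊆ S.image f)
  have := hupp S hS
  omega

lemma card_filter_lt_card_fiber_lt (hα : 2 ≤ α)
    (hlow : ∀ S : Finset ι, #S = s → α ≤ #(S.image f)) (T : Finset γ) :
    #{w ∈ T | (s - 1) / (α - 1) < #{i | f i = w}} < α - 1 := by
  by_contra! hB
  obtain ⟨W, hWB, hW⟩ := exists_subset_card_eq hB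
  have hlarge : (α - 1) * ((s - 1) / (α - 1) + 1) ≤ ∑ w ∈ W, #{i | f i = w} := by
    calc (α - 1) * ((s - 1) / (α - 1) + 1) = #W • ((s - 1) / (α - 1) + 1) := by
          rw [hW, smul_eq_mul]
      _ ≤ _ := card_nsmul_le_sum _ _ _ fun w hw => (mem_filter.1 (hWB hw)).2
  have := Nat.lt_mul_div_succ (s - 1) (show 0 < α - 1 by omega)
  have := sum_card_fiber_lt_of_card_lt f hlow (show #W < α by omega)
  omega

theorem card_lt_of_forall_card_image_mem_Icc (hα : 2 ≤ α) (hβs : β < s)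
    (H : ∀ S : Finset ι, #S = s → #(S.image f) ∈ Set.Icc α β) :
    Fintype.card ι < (β - α + 1) * ((s - 1) / (α - 1)) + s := by
  by_cases hs : Fintype.card ι < s
  · omega
  rw [not_lt] at hs
  have hlow S hS := (H S hS).1
  set T := univ.image f
  set m := (s - 1) / (α - 1)
  have hαT : α ≤ #T := by
    obtain ⟨S, -, hS⟩ := exists_subset_card_eq (show s ≤ #(univ : Finset ι) from hs)
    exact (hlow S hS).trans (card_le_card (image_subset_image (subset_univ S)))
  have hTβ : #T ≤ β := card_image_univ_le f (fun S hS => (H S hS).2) hβs hs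
  obtain ⟨W, hBW, hWT, hW⟩ := exists_subsuperset_card_eq (filter_subset _ T)
    (card_filter_lt_card_fiber_lt f hα hlow T).le (show α - 1 ≤ #T by omega)
  have hsmall : ∑ w ∈ T \ W, #{i | f i = w} ≤ #(T \ W) • m :=
    sum_le_card_nsmul _ _ _ fun w hw => by
      by_contra! h
      exact (mem_sdiff.1 hw).2 (hBW (mem_filter.2 ⟨(mem_sdiff.1 hw).1, h⟩))
  have hcard : Fintype.card ι = ∑ w ∈ T \ W, #{i | f i = w} + ∑ w ∈ W, #{i | f i = w} := by
    rw [sum_sdiff hWT, ← card_univ]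
    exact card_eq_sum_card_image f univ
  have := sum_card_fiber_lt_of_card_lt f hlow (show #W < α by omega)
  rw [card_sdiff_of_subset hWT, smul_eq_mul] at hsmall
  have : (#T - #W) * m ≤ (β - α + 1) * m := Nat.mul_le_mul_right m (by omega)
  omega

end Finset

lemma Finset.exists_map_val_eq_of_card_eq {ι M : Type*} [DecidableEq ι] [Zero M] (S : Finset ι)
    {μ : Multiset M} (hS : #S = Multiset.card μ) :
    ∃ g : ι → M, S.val.map g = μ ∧ ∀ i ∉ S, g i = 0 := by
  induction S using Finset.cons_induction generalizing μ with
  | empty =>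
    refine ⟨0, ?_, fun _ _ => rfl⟩
    simpa [eq_comm] using hS
  | cons a S ha ih =>
    obtain ⟨x, hx⟩ := Multiset.card_pos_iff_exists_mem.1 (by rw [← hS, card_cons]; omega)
    obtain ⟨μ, rfl⟩ := Multiset.exists_cons_of_mem hx
    obtain ⟨g, hgS, hg0⟩ := ih (μ := μ) (by rw [card_cons, Multiset.card_cons] at hS; omega)
    refine ⟨Function.update g a x, ?_, fun i hi => ?_⟩
    · rw [cons_val, Multiset.map_cons, Function.update_self,
        Multiset.map_congr rfl fun i hi => Function.update_of_ne (ne_of_mem_of_not_mem hi ha) x g,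
        hgS]
    · rw [mem_cons, not_or] at hi
      rw [Function.update_of_ne hi.1, hg0 i hi.2]

def classPrefixes {n : ℕ} (q : ℕ) (g : Fin n → ℕ) : Finset (Fin n × Fin q) :=
  {v | (v.2 : ℕ) < g v.1}

lemma card_filter_classPrefixes_fst_eq {n q : ℕ} {g : Fin n → ℕ} (hg : ∀ i, g i ≤ q)
    (i : Fin n) : #{v ∈ classPrefixes q g | v.1 = i} = g i := by
  have : {v ∈ classPrefixes q g | v.1 = i} =
      ({i} : Finset (Fin n)) ×ˢ ({j : Fin q | j < g i} : Finset (Fin q)) := by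
    ext ⟨k, j⟩
    simp only [classPrefixes, mem_filter, mem_univ, true_and, mem_product, mem_singleton]
    constructor
    · rintro ⟨hj, rfl⟩; exact ⟨rfl, hj⟩
    · rintro ⟨rfl, hj⟩; exact ⟨hj, rfl⟩
  rw [this, card_product, card_singleton, one_mul, Fin.card_filter_val_lt, min_eq_right (hg i)]

lemma exists_sigmaEdge_image_fst_eq {n q : ℕ} {σ : Multiset ℕ} (hσ : ∀ x ∈ σ, 0 < x ∧ x ≤ q)
    {S : Finset (Fin n)} (hS : #S = Multiset.card σ) :
    ∃ K, sigmaEdge n q σ K ∧ K.image Prod.fst = S := by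
  obtain ⟨g, hgS, hg0⟩ := S.exists_map_val_eq_of_card_eq hS
  have hgσ : ∀ i ∈ S, 0 < g i ∧ g i ≤ q := fun i hi => hσ _ (hgS ▸ Multiset.mem_map_of_mem g hi)
  have hgpos : ∀ i, 0 < g i ↔ i ∈ S := fun i =>
    ⟨fun h => by_contra fun hi => by simp [hg0 i hi] at h, fun hi => (hgσ i hi).1⟩
  have hgq : ∀ i, g i ≤ q := fun i => by
    by_cases hi : i ∈ S
    · exact (hgσ i hi).2
    · rw [hg0 i hi]; exact Nat.zero_le q
  refine ⟨classPrefixes q g, ?_, ?_⟩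
  · have hS' : ({i | g i ≠ 0} : Finset (Fin n)) = S := by
      ext i; simp [← hgpos, Nat.pos_iff_ne_zero]
    simp only [sigmaEdge, card_filter_classPrefixes_fst_eq hgq, Multiset.filter_map]
    rw [← hgS, ← hS']
    rfl
  · ext i
    simp only [classPrefixes, mem_image, mem_filter, mem_univ, true_and, ← hgpos]
    exact ⟨fun ⟨v, hv, hvi⟩ => hvi ▸ (Nat.zero_le _).trans_lt hv,
      fun hi => ⟨(i, ⟨0, (hi.trans_le (hgq i))⟩), hi, rfl⟩⟩

theorem stmt9_general (n r q α β Δ : ℕ) (σ : Multiset ℕ)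
    (hpart : IsPartitionOf σ r)
    (hΔmax : ∀ x ∈ σ, x ≤ Δ)
    (hα : 2 ≤ α) (hβs : β < σ.card)
    (hq : Δ ≤ q)
    (hn : (β - α + 1) * ((σ.card - 1) / (α - 1)) + σ.card ≤ n) :
    ∀ c : Fin n × Fin q → ℕ, classesMonochromatic n q c →
      ¬ isABColouring n q σ α β c := by
  intro c hmono hcol
  have hσ : ∀ x ∈ σ, 0 < x ∧ x ≤ q := fun x hx =>
    ⟨Nat.pos_of_ne_zero (ne_of_mem_of_not_mem hx hpart.2), (hΔmax x hx).trans hq⟩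
  obtain ⟨x, hx⟩ := Multiset.card_pos_iff_exists_mem.1 (Nat.zero_lt_of_lt hβs)
  let f : Fin n → ℕ := fun i => c (i, ⟨0, (hσ x hx).1.trans_le (hσ x hx).2⟩)
  have hcolf : ∀ S : Finset (Fin n), #S = σ.card → #(S.image f) ∈ Set.Icc α β := by
    intro S hS
    obtain ⟨K, hK, hKS⟩ := exists_sigmaEdge_image_fst_eq hσ hS
    have hKc : K.image c = S.image f := by
      rw [← hKS, image_image]
      exact image_congr fun v _ => hmono v _ rfl
    exact hKc ▸ hcol K hK
  have := card_lt_of_forall_card_image_mem_Icc f hα hβs hcolf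
  rw [Fintype.card_fin] at this
  omega

theorem stmt9 (n r q α β Δ : ℕ) (σ : Multiset ℕ)
    (hpart : IsPartitionOf σ r)
    (hΔmem : Δ ∈ σ) (hΔmax : ∀ x ∈ σ, x ≤ Δ)
    (hα : 2 ≤ α) (hαβ : α ≤ β) (hβs : β < σ.card)
    (hq : Δ ≤ q)
    (hn : (β - α + 1) * ((σ.card - 1) / (α - 1)) + σ.card ≤ n) :
    ∀ c : Fin n × Fin q → ℕ, classesMonochromatic n q c →
      ¬ isABColouring n q σ α β c :=
  stmt9_general n r q α β Δ σ hpart hΔmax hα hβs hq hn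
end

section
/- Suppose 1 < α ≤ β < s(σ) < r, q ≥ β(Δ(σ)-1) + 1 and n ≥ ⌊(s(σ)-1)/(α-1)⌋·(s(σ)-α) + 2s(σ) - 1. Then H(n,r,q|σ) is not (α,β)-colourable. -/
/-!
Let `c` be an `(α,β)`-colouring. A set of vertices in distinct classes with distinct colours
extends to an edge, so it has at most `β` vertices; take such a set `W` of maximum size. Every class
missed by `W` is coloured with the at most `β` colours of `W` only, so as `q > β(Δ-1)` it has `Δ`
vertices of one colour, its strong colour. These monochromatic sets in any `s` such classes span an
edge, so no `α - 1` colours are the strong colours of `s` classes. Hence all but `α - 1` colours are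
strong for at most `⌊(s-1)/(α-1)⌋` classes each, and counting the at least `n - β` classes missed
by `W` contradicts the bound on `n`.
-/


open Finset

theorem Finset.sum_le_of_forall_card_le {ι : Type*} [DecidableEq ι] {X : Finset ι} {m : ι → ℕ}
    {k B : ℕ} (hk : 0 < k) (h : ∀ Y ⊆ X, #Y ≤ k → ∑ y ∈ Y, m y ≤ B) :
    ∑ y ∈ X, m y ≤ B + (#X - k) * (B / k) := by
  rcases le_or_gt #X k with hXk | hkX
  · exact (h X subset_rfl hXk).trans (Nat.le_add_right _ _)
  obtain ⟨Y, hY, hYmax⟩ := exists_max_image (X.powersetCard k) (fun Y => ∑ y ∈ Y, m y)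
    (powersetCard_nonempty.mpr hkX.le)
  obtain ⟨hYX, hYk⟩ := mem_powersetCard.mp hY
  obtain ⟨z, hzY, hzmin⟩ := exists_min_image Y m (card_pos.mp (hYk ▸ hk))
  have hzB : m z ≤ B / k := by
    rw [Nat.le_div_iff_mul_le hk, mul_comm, ← hYk, ← smul_eq_mul, ← sum_const]
    exact (sum_le_sum hzmin).trans (h Y hYX hYk.le)
  -- exchanging `z` for `y` cannot increase the sum over a maximal `Y`
  have hswap : ∀ y ∈ X \ Y, m y ≤ B / k := by
    intro y hy
    obtain ⟨hyX, hyY⟩ := mem_sdiff.mp hy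
    have hyY' : y ∉ Y.erase z := fun h => hyY (mem_of_mem_erase h)
    have hmem : insert y (Y.erase z) ∈ X.powersetCard k := by
      refine mem_powersetCard.mpr ⟨insert_subset hyX ((erase_subset z Y).trans hYX), ?_⟩
      rw [card_insert_of_notMem hyY', card_erase_of_mem hzY]
      omega
    have hle := hYmax _ hmem
    rw [sum_insert hyY', ← add_sum_erase Y m hzY] at hle
    omega
  calc ∑ y ∈ X, m y = ∑ y ∈ X \ Y, m y + ∑ y ∈ Y, m y := (sum_sdiff hYX).symm
    _ ≤ #(X \ Y) * (B / k) + B :=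
      add_le_add (by simpa using sum_le_card_nsmul _ _ _ hswap) (h Y hYX hYk.le)
    _ = B + (#X - k) * (B / k) := by rw [card_sdiff_of_subset hYX, hYk, add_comm]

theorem Finset.exists_map_val_eq {γ δ : Type*} [Nonempty δ] (S : Finset γ) {σ : Multiset δ}
    (hS : #S = σ.card) : ∃ p : γ → δ, S.val.map p = σ := by
  classical
  induction σ using Multiset.induction generalizing S with
  | empty => exact ⟨fun _ => Classical.ofNonempty, by simp_all⟩
  | cons a σ ih =>
    obtain ⟨i, hi⟩ := card_pos.mp (by rw [hS]; simp)
    obtain ⟨p, hp⟩ := ih (S.erase i) (by rw [card_erase_of_mem hi, hS]; simp)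
    refine ⟨Function.update p i a, ?_⟩
    rw [← insert_erase hi, insert_val_of_notMem (notMem_erase i S), Multiset.map_cons,
      Function.update_self, ← hp]
    congr 1
    exact Multiset.map_congr rfl fun j hj => Function.update_of_ne (ne_of_mem_erase hj) _ _

section SigmaEdge

variable {n q : ℕ} {σ : Multiset ℕ}

theorem card_filter_fst_eq (i : Fin n) : #{v : Fin n × Fin q | v.1 = i} = q := by
  rw [show ({v : Fin n × Fin q | v.1 = i} : Finset _) = {i} ×ˢ univ by ext ⟨j, x⟩; simp [eq_comm]]
  simp

theorem sigmaEdge_of_card_filter_eq (hσ : 0 ∉ σ) {S : Finset (Fin n)} {p : Fin n → ℕ}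
    (hp : S.val.map p = σ) {K : Finset (Fin n × Fin q)}
    (hK : ∀ i, #{v ∈ K | v.1 = i} = if i ∈ S then p i else 0) : sigmaEdge n q σ K := by
  have hp0 : ∀ i ∈ S, p i ≠ 0 := fun i hi h =>
    hσ (hp ▸ h ▸ Multiset.mem_map_of_mem p (mem_val.mpr hi))
  have hsupp : (univ : Finset (Fin n)).val.filter (fun i => #{v ∈ K | v.1 = i} ≠ 0) = S.val := by
    rw [← filter_val]
    congr 1
    ext i
    by_cases hi : i ∈ S <;> simp [hK, hi, hp0]
  simp only [sigmaEdge, Multiset.filter_map, Function.comp_def, hsupp]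
  rw [← hp]
  exact Multiset.map_congr rfl fun i hi => by rw [hK, if_pos (mem_val.mp hi)]

theorem card_filter_fst_biUnion {S : Finset (Fin n)} {A : Fin n → Finset (Fin n × Fin q)}
    (hA : ∀ i ∈ S, ∀ v ∈ A i, v.1 = i) (i : Fin n) :
    #{v ∈ S.biUnion A | v.1 = i} = if i ∈ S then #(A i) else 0 := by
  have hmem : ∀ v, v ∈ S.biUnion A ↔ v.1 ∈ S ∧ v ∈ A v.1 := by
    intro v
    rw [mem_biUnion]
    refine ⟨fun ⟨j, hj, hv⟩ => ?_, fun h => ⟨v.1, h⟩⟩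
    obtain rfl := hA j hj v hv
    exact ⟨hj, hv⟩
  split_ifs with hi
  · congr 1
    ext v
    simp only [mem_filter, hmem]
    refine ⟨fun ⟨⟨_, hv⟩, h⟩ => h ▸ hv, fun hv => ?_⟩
    obtain rfl := hA i hi v hv
    exact ⟨⟨hi, hv⟩, rfl⟩
  · rw [card_eq_zero, filter_eq_empty_iff]
    exact fun v hv h => hi (h ▸ ((hmem v).mp hv).1)

theorem exists_sigmaEdge (hσ : 0 ∉ σ) {S : Finset (Fin n)} (hS : #S = σ.card)
    {W U : Finset (Fin n × Fin q)} (hWU : W ⊆ U)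
    (hW : Set.InjOn Prod.fst (W : Set (Fin n × Fin q)))
    (hWS : ∀ v ∈ W, v.1 ∈ S) (hU : ∀ i ∈ S, ∀ x ∈ σ, x ≤ #{v ∈ U | v.1 = i}) :
    ∃ K, sigmaEdge n q σ K ∧ W ⊆ K ∧ K ⊆ U ∧ ∀ v ∈ K, v.1 ∈ S := by
  obtain ⟨p, hp⟩ := S.exists_map_val_eq hS
  have hpσ : ∀ i ∈ S, p i ∈ σ := fun i hi => hp ▸ Multiset.mem_map_of_mem p (mem_val.mpr hi)
  have hA : ∀ i, ∃ A : Finset (Fin n × Fin q), i ∈ S →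
      {v ∈ W | v.1 = i} ⊆ A ∧ A ⊆ {v ∈ U | v.1 = i} ∧ #A = p i := by
    intro i
    by_cases hi : i ∈ S
    · have hWi : #{v ∈ W | v.1 = i} ≤ p i := by
        refine (card_le_one.mpr fun u hu v hv => ?_).trans
          (Nat.one_le_iff_ne_zero.mpr fun h => hσ (h ▸ hpσ i hi))
        rw [mem_filter] at hu hv
        exact hW hu.1 hv.1 (hu.2.trans hv.2.symm)
      obtain ⟨A, hA⟩ := exists_subsuperset_card_eq (filter_subset_filter _ hWU) hWi
        (hU i hi _ (hpσ i hi))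
      exact ⟨A, fun _ => hA⟩
    · exact ⟨∅, fun h => absurd h hi⟩
  choose A hA using hA
  have hAcls : ∀ i ∈ S, ∀ v ∈ A i, v ∈ U ∧ v.1 = i := fun i hi v hv =>
    mem_filter.mp ((hA i hi).2.1 hv)
  refine ⟨S.biUnion A, sigmaEdge_of_card_filter_eq hσ hp fun i => ?_, fun v hv => ?_,
    fun v hv => ?_, fun v hv => ?_⟩
  · rw [card_filter_fst_biUnion fun i hi v hv => (hAcls i hi v hv).2]
    split_ifs with hi
    exacts [(hA i hi).2.2, rfl]
  · exact mem_biUnion.mpr ⟨v.1, hWS v hv, (hA _ (hWS v hv)).1 (mem_filter.mpr ⟨hv, rfl⟩)⟩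
  · obtain ⟨i, hi, hvA⟩ := mem_biUnion.mp hv
    exact (hAcls i hi v hvA).1
  · obtain ⟨i, hi, hvA⟩ := mem_biUnion.mp hv
    exact (hAcls i hi v hvA).2 ▸ hi

end SigmaEdge

section Rainbow

variable {ι κ γ : Type*}

def IsRainbow (c : ι × κ → γ) (W : Finset (ι × κ)) : Prop :=
  Set.InjOn Prod.fst (W : Set (ι × κ)) ∧ Set.InjOn c (W : Set (ι × κ))

theorem IsRainbow.mono {c : ι × κ → γ} {V W : Finset (ι × κ)} (hW : IsRainbow c W)
    (hVW : V ⊆ W) : IsRainbow c V :=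
  ⟨hW.1.mono (coe_subset.mpr hVW), hW.2.mono (coe_subset.mpr hVW)⟩

theorem IsRainbow.insert [DecidableEq ι] [DecidableEq κ] [DecidableEq γ] {c : ι × κ → γ}
    {W : Finset (ι × κ)} {v : ι × κ} (hW : IsRainbow c W) (hv₁ : v.1 ∉ W.image Prod.fst)
    (hv₂ : c v ∉ W.image c) :
    IsRainbow c (insert v W) := by
  have hvW : v ∉ (W : Set (ι × κ)) := fun h => hv₁ (mem_image_of_mem _ h)
  rw [IsRainbow, coe_insert, Set.injOn_insert hvW, Set.injOn_insert hvW]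
  exact ⟨⟨hW.1, by simpa using hv₁⟩, ⟨hW.2, by simpa using hv₂⟩⟩

theorem exists_isRainbow_forall_mem_image [Fintype ι] [Fintype κ] [DecidableEq ι]
    [DecidableEq κ] [DecidableEq γ] (c : ι × κ → γ) :
    ∃ W, IsRainbow c W ∧ ∀ v, v.1 ∉ W.image Prod.fst → c v ∈ W.image c := by
  classical
  obtain ⟨W, hW, hmax⟩ := exists_max_image {W : Finset (ι × κ) | IsRainbow c W} card
    ⟨∅, mem_filter.mpr ⟨mem_univ _, by simp [IsRainbow]⟩⟩
  rw [mem_filter] at hW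
  refine ⟨W, hW.2, fun v hv₁ => by_contra fun hv₂ => ?_⟩
  have hvW : v ∉ W := fun h => hv₁ (mem_image_of_mem _ h)
  have := hmax (insert v W) (mem_filter.mpr ⟨mem_univ _, hW.2.insert hv₁ hv₂⟩)
  rw [card_insert_of_notMem hvW] at this
  omega

end Rainbow

section Colouring

variable {n q : ℕ} {σ : Multiset ℕ} {α β : ℕ} {c : Fin n × Fin q → ℕ}

theorem IsRainbow.card_le (hc : isABColouring n q σ α β c) (hσ : 0 ∉ σ)
    (hσq : ∀ x ∈ σ, x ≤ q) (hβs : β < σ.card) (hsn : σ.card ≤ n)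
    {W : Finset (Fin n × Fin q)} (hW : IsRainbow c W) : #W ≤ β := by
  by_contra! hWβ
  obtain ⟨W', hW'W, hW'card⟩ := exists_subset_card_eq (Nat.succ_le_of_lt hWβ)
  have hW' := hW.mono hW'W
  obtain ⟨S, hS, hScard⟩ := exists_superset_card_eq (n := σ.card) (s := W'.image Prod.fst)
    (by rw [card_image_of_injOn hW'.1, hW'card]; omega) (by simpa using hsn)
  obtain ⟨K, hK, hW'K, -⟩ := exists_sigmaEdge hσ hScard (subset_univ W') hW'.1
    (fun v hv => hS (mem_image_of_mem _ hv)) (fun i _ x hx => by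
      simpa only [filter_mem_eq_inter, univ_inter, card_filter_fst_eq] using hσq x hx)
  have := card_le_card (image_subset_image (f := c) hW'K)
  rw [card_image_of_injOn hW'.2, hW'card] at this
  have := (hc K hK).2
  omega

theorem card_filter_mem_lt (hc : isABColouring n q σ α β c) (hσ : 0 ∉ σ) {C : Finset (Fin n)}
    {a : Fin n → ℕ} (ha : ∀ i ∈ C, ∀ x ∈ σ, x ≤ #{v : Fin n × Fin q | v.1 = i ∧ c v = a i})
    {Y : Finset ℕ} (hY : #Y < α) : #{i ∈ C | a i ∈ Y} < σ.card := by
  by_contra! hCY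
  obtain ⟨S, hSC, hScard⟩ := exists_subset_card_eq hCY
  obtain ⟨K, hK, -, hKU, hKS⟩ := exists_sigmaEdge (W := ∅)
    (U := {v : Fin n × Fin q | c v = a v.1}) hσ hScard (empty_subset _) (by simp) (by simp)
    (fun i hi x hx => by
      rw [filter_filter]
      refine (ha i (mem_filter.mp (hSC hi)).1 x hx).trans_eq (congrArg card (filter_congr ?_))
      rintro v -
      constructor
      · rintro ⟨rfl, h⟩; exact ⟨h, rfl⟩
      · rintro ⟨h, rfl⟩; exact ⟨rfl, h⟩)
  have hKY : K.image c ⊆ Y := by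
    intro y hy
    obtain ⟨v, hv, rfl⟩ := mem_image.mp hy
    rw [(mem_filter.mp (hKU hv)).2]
    exact (mem_filter.mp (hSC (hKS v hv))).2
  have := (hc K hK).1
  have := card_le_card hKY
  omega

end Colouring

theorem stmt11_general (n r q α β Δ : ℕ) (σ : Multiset ℕ)
    (hpart : IsPartitionOf σ r)
    (hΔmax : ∀ x ∈ σ, x ≤ Δ)
    (hα : 1 < α) (hαβ : α ≤ β) (hβs : β < σ.card)
    (hq : β * (Δ - 1) + 1 ≤ q)
    (hn : ((σ.card - 1) / (α - 1)) * (σ.card - α) + 2 * σ.card - 1 ≤ n) :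
    ∀ c : Fin n × Fin q → ℕ, ¬ isABColouring n q σ α β c := by
  intro c hc
  have hσ : 0 ∉ σ := hpart.2
  have hΔq : Δ ≤ q := by
    have := Nat.le_mul_of_pos_left (Δ - 1) (by omega : 0 < β)
    omega
  obtain ⟨W, hW, hWcol⟩ := exists_isRainbow_forall_mem_image c
  have hWβ : #W ≤ β := hW.card_le hc hσ (fun x hx => (hΔmax x hx).trans hΔq) hβs (by omega)
  set G := (univ : Finset (Fin n)) \ W.image Prod.fst
  have hstrong : ∀ i ∈ G, ∃ y ∈ W.image c, Δ ≤ #{v : Fin n × Fin q | v.1 = i ∧ c v = y} := by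
    intro i hi
    obtain ⟨y, hy, hlt⟩ := exists_lt_card_fiber_of_mul_lt_card_of_maps_to (n := Δ - 1)
      (s := {v : Fin n × Fin q | v.1 = i}) (t := W.image c)
      (fun v hv => hWcol v ((mem_filter.mp hv).2 ▸ (mem_sdiff.mp hi).2))
      (by
        rw [card_filter_fst_eq, card_image_of_injOn hW.2]
        exact (Nat.mul_le_mul_right _ hWβ).trans_lt hq)
    rw [filter_filter] at hlt
    exact ⟨y, hy, by omega⟩
  choose! a haW ha using hstrong
  have hfew : ∀ Y ⊆ G.image a, #Y ≤ α - 1 → ∑ y ∈ Y, #{i ∈ G | a i = y} ≤ σ.card - 1 := by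
    intro Y _ hY
    rw [sum_card_fiberwise_eq_card_filter]
    have := card_filter_mem_lt hc hσ (fun i hi x hx => (hΔmax x hx).trans (ha i hi))
      (Y := Y) (by omega)
    omega
  have hGle := card_eq_sum_card_image a G ▸ sum_le_of_forall_card_le (by omega) hfew
  have hGge : n - β ≤ #G := by
    rw [card_univ_sdiff, Fintype.card_fin]
    have := (card_image_le (f := Prod.fst) (s := W)).trans hWβ
    omega
  have hcolours : #(G.image a) - (α - 1) ≤ σ.card - α := by
    have := (card_le_card (image_subset_iff.mpr haW)).trans (card_image_le.trans hWβ)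
    omega
  have := (Nat.mul_le_mul_right ((σ.card - 1) / (α - 1)) hcolours).trans_eq (mul_comm _ _)
  omega

theorem stmt11 (n r q α β Δ : ℕ) (σ : Multiset ℕ)
    (hpart : IsPartitionOf σ r)
    (hΔmem : Δ ∈ σ) (hΔmax : ∀ x ∈ σ, x ≤ Δ)
    (hα : 1 < α) (hαβ : α ≤ β) (hβs : β < σ.card) (hsr : σ.card < r)
    (hq : β * (Δ - 1) + 1 ≤ q)
    (hn : ((σ.card - 1) / (α - 1)) * (σ.card - α) + 2 * σ.card - 1 ≤ n) :
    ∀ c : Fin n × Fin q → ℕ, ¬ isABColouring n q σ α β c :=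
  stmt11_general n r q α β Δ σ hpart hΔmax hα hαβ hβs hq hn
end

section
/- Let H = H(n,r,q|σ) with Δ(σ) ≥ α, δ(σ) ≤ r - β, α ≤ s(σ) ≤ β, q = (β-α+1)⌊(Δ-1)/(α-1)⌋ + Δ - 1 and n ≥ C(β+1, α-1)·(s(σ)-1) + s(σ). Then H is β-(α,β)-colourable but not (β+1)-(α,β)-colourable, and it is k-(α,β)-colourable for all k in the monochromatic zone [⌈(n - (s(σ)-1 - (α-1)⌊(s(σ)-1)/(α-1)⌋))/⌊(s(σ)-1)/(α-1)⌋⌉, n], whose lower bound exceeds β+1; hence the (α,β)-spectrum of H has a gap. -/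
/-!
For the `β`-colouring, colour every class by the same pattern in which each of `β` colours
occurs at most `t = ⌊(Δ-1)/(α-1)⌋` times, except that colour `0` absorbs the `q - βt` surplus
points; then any `α - 1` colours cover at most `Δ - 1` points of a class, so the `Δ` vertices an
edge has in one class already carry `α` colours. In the monochromatic zone the same kind of
pattern is laid on the classes themselves, so that any `α - 1` colours cover fewer than `s(σ)`
classes.

For the gap, suppose `β + 1` colours are used. Call a class spread if any `α - 1` colours cover at
most `Δ - 1` of its vertices. If `s(σ)` non-spread classes had the same heavy set of `α - 1`
colours they would carry an edge with fewer than `α` colours, so by pigeonhole at least `s(σ)`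
classes are spread. The value of `q` forces every spread class to show at least `β` colours, so
the parts of `σ` other than `δ` can be placed greedily in `s(σ) - 1` spread classes to see `β`
colours. Placing `δ` in a further class that contains the missing colour gives an edge with
`β + 1` colours; such a class exists after a case analysis on the colours the spread classes
miss, where in one case the first part is placed so as to catch a prescribed colour.
-/

open Finset

open Function

section Edges

variable {n q : ℕ} {σ τ : Multiset ℕ} {K : Finset (Fin n × Fin q)}

theorem sigmaEdge_iff :
    sigmaEdge n q σ K ↔ (K.image Prod.fst).val.map (fun i => #{v ∈ K | v.1 = i}) = σ := by
  have hfst : K.image Prod.fst = univ.filter fun i => #{v ∈ K | v.1 = i} ≠ 0 := by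
    ext i
    simp
  rw [sigmaEdge, Multiset.filter_map, hfst, Finset.filter_val]
  rfl

theorem sigmaEdge.card_image_fst (hK : sigmaEdge n q σ K) :
    #(K.image Prod.fst) = Multiset.card σ := by
  rw [← sigmaEdge_iff.1 hK, Multiset.card_map]
  rfl

theorem sigmaEdge.exists_card_filter_eq (hK : sigmaEdge n q σ K) {x : ℕ} (hx : x ∈ σ) :
    ∃ i, #{v ∈ K | v.1 = i} = x := by
  rw [← sigmaEdge_iff.1 hK] at hx
  obtain ⟨i, -, hi⟩ := Multiset.mem_map.1 hx
  exact ⟨i, hi⟩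

theorem sigmaEdge_empty : sigmaEdge n q 0 ∅ :=
  sigmaEdge_iff.2 rfl

theorem sigmaEdge.union_product (hK : sigmaEdge n q τ K) {D : Fin n} (hD : ∀ v ∈ K, v.1 ≠ D)
    {B : Finset (Fin q)} (hB : B.Nonempty) :
    sigmaEdge n q (#B ::ₘ τ) (K ∪ {D} ×ˢ B) := by
  rw [sigmaEdge_iff] at hK ⊢
  have hDK : D ∉ K.image Prod.fst := by
    simp only [mem_image, not_exists, not_and]
    exact hD
  have hfiber : ∀ i,
      #{v ∈ K ∪ {D} ×ˢ B | v.1 = i} = if i = D then #B else #{v ∈ K | v.1 = i} := by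
    intro i
    rw [filter_union, filter_product_left (fun a => a = i)]
    split_ifs with h
    · subst h
      rw [filter_false_of_mem fun v hv => hD v hv, filter_true_of_mem fun _ h => mem_singleton.1 h]
      simp
    · rw [filter_singleton, if_neg (Ne.symm h), empty_product, union_empty]
  rw [image_union, product_image_fst hB, union_comm _ {D}, ← insert_eq, insert_val_of_notMem hDK,
    Multiset.map_cons, ← hK, hfiber, if_pos rfl]
  congr 1
  refine Multiset.map_congr rfl fun i hi => ?_
  rw [hfiber, if_neg (ne_of_mem_of_not_mem hi hDK)]

theorem image_union_product {γ : Type*} [DecidableEq γ] (c : Fin n × Fin q → γ) (D : Fin n)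
    (B : Finset (Fin q)) :
    (K ∪ {D} ×ˢ B).image c = K.image c ∪ B.image (curry c D) := by
  rw [image_union, singleton_product, map_eq_image, image_image]
  rfl

end Edges

section Greedy

variable {ι γ : Type*} [Fintype ι] [DecidableEq ι] [DecidableEq γ]

theorem exists_superset_min_le_card_union_image (f : ι → γ) (R : Finset γ) (A₀ : Finset ι) :
    ∀ m, #A₀ + m ≤ Fintype.card ι → ∃ A, A₀ ⊆ A ∧ #A = #A₀ + m ∧
      min (#(R ∪ A₀.image f) + m) #(R ∪ univ.image f) ≤ #(R ∪ A.image f)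
  | 0, _ => ⟨A₀, subset_rfl, rfl, min_le_left _ _⟩
  | m + 1, hm => by
    obtain ⟨A, hA₀, hAcard, hA⟩ := exists_superset_min_le_card_union_image f R A₀ m (by omega)
    obtain ⟨i, hiA, hi⟩ : ∃ i ∉ A, f i ∉ R ∪ A.image f ∨ ∀ j, f j ∈ R ∪ A.image f := by
      by_cases hcov : ∀ j, f j ∈ R ∪ A.image f
      · obtain ⟨i, -, hiA⟩ := exists_mem_notMem_of_card_lt_card (s := A) (t := univ)
          (by rw [card_univ]; omega)
        exact ⟨i, hiA, Or.inr hcov⟩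
      · obtain ⟨i, hi⟩ := not_forall.1 hcov
        exact ⟨i, fun h => hi (mem_union_right _ (mem_image_of_mem f h)), Or.inl hi⟩
    refine ⟨insert i A, hA₀.trans (subset_insert _ _),
      by rw [card_insert_of_notMem hiA, hAcard]; rfl, ?_⟩
    rcases hi with hi | hcov
    · rw [image_insert, union_insert, card_insert_of_notMem hi]
      omega
    · refine (min_le_right _ _).trans (card_le_card (union_subset subset_union_left ?_))
      intro x hx
      obtain ⟨j, -, rfl⟩ := mem_image.1 hx
      exact union_subset_union_right (image_subset_image (subset_insert i A)) (hcov j)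

theorem exists_card_eq_mem_image_min_le (f : ι → γ) {z : γ} (hz : z ∈ univ.image f) {p : ℕ}
    (hp : 0 < p) (hpι : p ≤ Fintype.card ι) :
    ∃ A : Finset ι, #A = p ∧ z ∈ A.image f ∧ min p #(univ.image f) ≤ #(A.image f) := by
  obtain ⟨i, -, rfl⟩ := mem_image.1 hz
  obtain ⟨A, hiA, hA, hAf⟩ := exists_superset_min_le_card_union_image f ∅ {i} (p - 1)
    (by rw [card_singleton]; omega)
  simp only [image_singleton, empty_union, card_singleton] at hA hAf
  exact ⟨A, by omega, mem_image_of_mem f (hiA (mem_singleton_self i)), by omega⟩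

end Greedy

section Spread

variable {ι γ : Type*} [Fintype ι] [DecidableEq γ] {f : ι → γ} {a b : ℕ}

def IsSpread (f : ι → γ) (a b : ℕ) : Prop :=
  ∀ S : Finset γ, #S ≤ a → #{i | f i ∈ S} ≤ b

theorem IsSpread.card_filter_mem_le (hf : IsSpread f a b) (ha : 0 < a) (S : Finset γ) :
    #{i | f i ∈ S} ≤ b + (#S - a) * (b / a) := by
  induction S using Finset.strongInduction with
  | H S ih =>
    by_cases hS : #S ≤ a
    · exact (hf S hS).trans (Nat.le_add_right _ _)
    obtain ⟨x, hx, hmin⟩ := exists_min_image S (fun x => #{i | f i = x})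
      (card_pos.1 (by omega))
    -- the rarest colour of `S` is at most as frequent as the average of any `a` colours
    have hxle : #{i | f i = x} ≤ b / a := by
      obtain ⟨S', hS'S, hS'⟩ := exists_subset_card_eq (s := S) (n := a) (by omega)
      rw [Nat.le_div_iff_mul_le ha]
      calc #{i | f i = x} * a = ∑ _y ∈ S', #{i | f i = x} := by
            rw [sum_const, hS', smul_eq_mul, mul_comm]
        _ ≤ ∑ y ∈ S', #{i | f i = y} := sum_le_sum fun y hy => hmin y (hS'S hy)
        _ = #{i | f i ∈ S'} := sum_card_fiberwise_eq_card_filter _ _ _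
        _ ≤ b := hf S' hS'.le
    have hsplit : #{i | f i ∈ S} = #{i | f i ∈ S.erase x} + #{i | f i = x} := by
      rw [← sum_card_fiberwise_eq_card_filter, ← sum_card_fiberwise_eq_card_filter,
        sum_erase_add _ _ hx]
    have hrec := ih (S.erase x) (erase_ssubset hx)
    rw [card_erase_of_mem hx] at hrec
    have hmul : (#S - a) * (b / a) = (#S - 1 - a) * (b / a) + b / a := by
      rw [← Nat.succ_mul]
      congr 1
      omega
    omega

theorem IsSpread.card_le (hf : IsSpread f a b) (ha : 0 < a) :
    Fintype.card ι ≤ b + (#(univ.image f) - a) * (b / a) := by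
  simpa using hf.card_filter_mem_le ha (univ.image f)

theorem IsSpread.le_card_image {α β Δ : ℕ} (hf : IsSpread f (α - 1) (Δ - 1)) (hα : 2 ≤ α)
    (hΔα : α ≤ Δ) (hcard : Fintype.card ι = (β - α + 1) * ((Δ - 1) / (α - 1)) + Δ - 1) :
    β ≤ #(univ.image f) := by
  have ht : 0 < (Δ - 1) / (α - 1) := Nat.div_pos (by omega) (by omega)
  have h := hf.card_le (by omega)
  have : (β - α + 1) * ((Δ - 1) / (α - 1))
      ≤ (#(univ.image f) - (α - 1)) * ((Δ - 1) / (α - 1)) := by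
    omega
  have := Nat.le_of_mul_le_mul_right this ht
  omega

theorem exists_mem_powersetCard_of_not_isSpread (hf : ¬ IsSpread f a b) {U : Finset γ}
    (hU : ∀ i, f i ∈ U) (ha : a ≤ #U) : ∃ S ∈ U.powersetCard a, b < #{i | f i ∈ S} := by
  simp only [IsSpread, not_forall, not_le, exists_prop] at hf
  obtain ⟨S, hSa, hbS⟩ := hf
  obtain ⟨S₀, hSS₀, hS₀U, hS₀⟩ := exists_subsuperset_card_eq
    (inter_subset_right (s₁ := S) (s₂ := U)) ((card_le_card inter_subset_left).trans hSa) ha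
  refine ⟨S₀, mem_powersetCard.2 ⟨hS₀U, hS₀⟩, hbS.trans_le (card_le_card fun i hi => ?_)⟩
  simp only [mem_filter, mem_univ, true_and] at hi ⊢
  exact hSS₀ (mem_inter.2 ⟨hi, hU i⟩)

end Spread

section Assembly

variable {n q : ℕ} {γ : Type*} [DecidableEq γ]

theorem exists_sigmaEdge_subset (F : Fin n → Finset (Fin q)) (τ : Multiset ℕ) (h0 : 0 ∉ τ) :
    ∀ T : Finset (Fin n), #T = Multiset.card τ → (∀ C ∈ T, ∀ p ∈ τ, p ≤ #(F C)) →
      ∃ K, sigmaEdge n q τ K ∧ ∀ v ∈ K, v.1 ∈ T ∧ v.2 ∈ F v.1 := by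
  induction τ using Multiset.induction_on with
  | empty => exact fun _ _ _ => ⟨∅, sigmaEdge_empty, by simp⟩
  | cons p τ ih =>
    intro T hT hF
    obtain ⟨C, hC⟩ : T.Nonempty := card_pos.1 (by rw [hT]; simp)
    obtain ⟨K, hK, hKT⟩ := ih (fun h => h0 (Multiset.mem_cons_of_mem h)) (T.erase C)
      (by rw [card_erase_of_mem hC, hT]; simp)
      fun C' hC' p' hp' => hF C' (mem_of_mem_erase hC') p' (Multiset.mem_cons_of_mem hp')
    obtain ⟨B, hBF, hB⟩ := exists_subset_card_eq (hF C hC p (Multiset.mem_cons_self _ _))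
    have hBne : B.Nonempty :=
      card_pos.1 (hB ▸ Nat.pos_of_ne_zero (ne_of_mem_of_not_mem (Multiset.mem_cons_self _ _) h0))
    refine ⟨K ∪ {C} ×ˢ B,
      hB ▸ hK.union_product (fun v hv => (mem_erase.1 (hKT v hv).1).1) hBne, ?_⟩
    intro v hv
    rcases mem_union.1 hv with hv | hv
    · exact ⟨mem_of_mem_erase (hKT v hv).1, (hKT v hv).2⟩
    · obtain ⟨h1, h2⟩ := mem_product.1 hv
      rw [mem_singleton.1 h1]
      exact ⟨hC, hBF h2⟩

theorem exists_sigmaEdge_min_le_card_image (c : Fin n × Fin q → γ) {k : ℕ} (τ : Multiset ℕ)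
    (hτ : ∀ p ∈ τ, 0 < p ∧ p ≤ q) :
    ∀ T : Finset (Fin n), #T = Multiset.card τ →
      (∀ C ∈ T, k ≤ #(univ.image (curry c C))) → ∀ R : Finset γ,
      ∃ K, sigmaEdge n q τ K ∧ (∀ v ∈ K, v.1 ∈ T) ∧ min (#R + τ.sum) k ≤ #(R ∪ K.image c) := by
  induction τ using Multiset.induction_on with
  | empty => exact fun _ _ _ R => ⟨∅, sigmaEdge_empty, by simp⟩
  | cons p τ ih =>
    intro T hT hk R
    obtain ⟨C, hC⟩ : T.Nonempty := card_pos.1 (by rw [hT]; simp)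
    obtain ⟨K, hK, hKT, hKR⟩ := ih (fun p' hp' => hτ p' (Multiset.mem_cons_of_mem hp'))
      (T.erase C) (by rw [card_erase_of_mem hC, hT]; simp)
      (fun C' hC' => hk C' (mem_of_mem_erase hC')) R
    obtain ⟨hp, hpq⟩ := hτ p (Multiset.mem_cons_self _ _)
    obtain ⟨B, -, hB, hBR⟩ := exists_superset_min_le_card_union_image (curry c C)
      (R ∪ K.image c) ∅ p (by simpa using hpq)
    rw [card_empty, zero_add] at hB
    rw [image_empty, union_empty] at hBR
    have hBne : B.Nonempty := card_pos.1 (hB ▸ hp)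
    refine ⟨K ∪ {C} ×ˢ B, hB ▸ hK.union_product (fun v hv => (mem_erase.1 (hKT v hv)).1) hBne,
      fun v hv => ?_, ?_⟩
    · rcases mem_union.1 hv with hv | hv
      · exact mem_of_mem_erase (hKT v hv)
      · rw [mem_singleton.1 (mem_product.1 hv).1]
        exact hC
    · have hCk : k ≤ #(R ∪ K.image c ∪ univ.image (curry c C)) :=
        (hk C hC).trans (card_le_card subset_union_right)
      rw [image_union_product, ← union_assoc, Multiset.sum_cons]
      omega

theorem exists_sigmaEdge_lt_card_image_of_erase (c : Fin n × Fin q → γ) {σ : Multiset ℕ}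
    {β δ : ℕ} (hδ : δ ∈ σ) (hδ0 : 0 < δ) (hδq : δ ≤ q) {K : Finset (Fin n × Fin q)}
    (hK : sigmaEdge n q (σ.erase δ) K) {D : Fin n} (hD : ∀ v ∈ K, v.1 ≠ D)
    (hβK : β ≤ #(K.image c)) (hβD : β < #(K.image c ∪ univ.image (curry c D))) :
    ∃ K', sigmaEdge n q σ K' ∧ β < #(K'.image c) := by
  obtain ⟨B, -, hB, hBK⟩ := exists_superset_min_le_card_union_image (curry c D)
    (K.image c) ∅ δ (by simpa using hδq)
  rw [card_empty, zero_add] at hB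
  rw [image_empty, union_empty] at hBK
  refine ⟨K ∪ {D} ×ˢ B, ?_, ?_⟩
  · have := hK.union_product hD (card_pos.1 (hB ▸ hδ0))
    rwa [hB, Multiset.cons_erase hδ] at this
  · rw [image_union_product]
    omega

end Assembly

section WideClasses

variable {n q β δ : ℕ} {σ : Multiset ℕ} {γ : Type*} [DecidableEq γ] {c : Fin n × Fin q → γ}
  {W : Finset (Fin n)}

theorem exists_sigmaEdge_lt_card_image_of_not_mem_wide (hσ : ∀ x ∈ σ, 0 < x ∧ x ≤ q)
    (hδ : δ ∈ σ) (hsum : β + δ ≤ σ.sum)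
    (hW : ∀ C ∈ W, β ≤ #(univ.image (curry c C))) (hWcard : Multiset.card σ ≤ #W)
    {D : Fin n} {z : γ} (hzD : z ∈ univ.image (curry c D))
    (hzW : ∀ C ∈ W, C ≠ D → z ∉ univ.image (curry c C)) :
    ∃ K, sigmaEdge n q σ K ∧ β < #(K.image c) := by
  have hcard : Multiset.card (σ.erase δ) = Multiset.card σ - 1 := Multiset.card_erase_of_mem hδ
  obtain ⟨T, hTW, hT⟩ := exists_subset_card_eq (s := W.erase D) (n := Multiset.card σ - 1)
    (by have := pred_card_le_card_erase (s := W) (a := D); omega)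
  obtain ⟨K, hK, hKT, hKβ⟩ := exists_sigmaEdge_min_le_card_image c (k := β) (σ.erase δ)
    (fun x hx => hσ x (Multiset.mem_of_mem_erase hx)) T (hT.trans hcard.symm)
    (fun C hC => hW C (mem_of_mem_erase (hTW hC))) ∅
  have hsum' := Multiset.sum_erase hδ
  rw [card_empty, zero_add, empty_union] at hKβ
  have hzK : z ∉ K.image c := by
    simp only [mem_image, not_exists, not_and]
    intro v hv hvz
    obtain ⟨hvD, hvW⟩ := mem_erase.1 (hTW (hKT v hv))
    exact hzW v.1 hvW hvD (mem_image.2 ⟨v.2, mem_univ _, hvz⟩)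
  refine exists_sigmaEdge_lt_card_image_of_erase c hδ (hσ δ hδ).1 (hσ δ hδ).2 hK
    (fun v hv => (mem_erase.1 (hTW (hKT v hv))).1) (by omega) ?_
  calc β < #(insert z (K.image c)) := by rw [card_insert_of_notMem hzK]; omega
    _ ≤ _ := card_le_card (insert_subset (mem_union_right _ hzD) subset_union_left)

theorem exists_sigmaEdge_lt_card_image_of_erase_subset (hσ : ∀ x ∈ σ, 0 < x ∧ x ≤ q)
    (hδ : δ ∈ σ) (hsum : β + δ ≤ σ.sum) (hσ2 : 2 ≤ Multiset.card σ)
    (hW : ∀ C ∈ W, β ≤ #(univ.image (curry c C))) (hWcard : Multiset.card σ ≤ #W)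
    (hU : β < #(univ.image c)) {C₁ C₂ : Fin n} (hC₂ : C₂ ∈ W) (hne : C₂ ≠ C₁)
    {z : γ} (hzC₂ : z ∈ univ.image (curry c C₂))
    (hzC₁ : (univ.image c).erase z ⊆ univ.image (curry c C₁)) :
    ∃ K, sigmaEdge n q σ K ∧ β < #(K.image c) := by
  have hcard : Multiset.card (σ.erase δ) = Multiset.card σ - 1 := Multiset.card_erase_of_mem hδ
  obtain ⟨p₀, hp₀⟩ :=
    Multiset.card_pos_iff_exists_mem.1 (hcard ▸ (by omega : 0 < Multiset.card σ - 1))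
  obtain ⟨hp₀0, hp₀q⟩ := hσ p₀ (Multiset.mem_of_mem_erase hp₀)
  -- the part placed in `C₂` is chosen first, so that it contains the colour `z`
  obtain ⟨A, hA, hzA, hAβ⟩ :=
    exists_card_eq_mem_image_min_le (curry c C₂) hzC₂ hp₀0 (by simpa using hp₀q)
  obtain ⟨T, hTW, hT⟩ := exists_subset_card_eq (s := (W.erase C₁).erase C₂)
    (n := Multiset.card σ - 2)
    (by have := pred_card_le_card_erase (s := W) (a := C₁)
        have := pred_card_le_card_erase (s := W.erase C₁) (a := C₂); omega)
  have hTC : ∀ C ∈ T, C ≠ C₂ ∧ C ≠ C₁ ∧ C ∈ W := fun C hC => by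
    simpa [and_assoc] using hTW hC
  obtain ⟨K, hK, hKT, hKβ⟩ :=
    exists_sigmaEdge_min_le_card_image c (k := β) ((σ.erase δ).erase p₀)
    (fun x hx => hσ x (Multiset.mem_of_mem_erase (Multiset.mem_of_mem_erase hx)))
    T (by rw [hT, Multiset.card_erase_of_mem hp₀, hcard, Nat.pred_eq_sub_one]; omega)
    (fun C hC => hW C (hTC C hC).2.2) (A.image (curry c C₂))
  have hK' := hK.union_product (fun v hv => (hTC v.1 (hKT v hv)).1) (card_pos.1 (hA ▸ hp₀0))
  rw [hA, Multiset.cons_erase hp₀] at hK'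
  have hsum₁ := Multiset.sum_erase hδ
  have hsum₂ := Multiset.sum_erase hp₀
  have hC₂β := hW C₂ hC₂
  refine exists_sigmaEdge_lt_card_image_of_erase c hδ (hσ δ hδ).1 (hσ δ hδ).2 hK' (D := C₁) ?_ ?_ ?_
  · intro v hv
    rcases mem_union.1 hv with hv | hv
    · exact (hTC v.1 (hKT v hv)).2.1
    · rw [mem_singleton.1 (mem_product.1 hv).1]
      exact hne
  · rw [image_union_product, union_comm]
    omega
  · refine hU.trans_le (card_le_card fun u hu => ?_)
    rw [image_union_product]
    by_cases huz : u = z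
    · exact mem_union_left _ (mem_union_right _ (huz ▸ hzA))
    · exact mem_union_right _ (hzC₁ (mem_erase.2 ⟨huz, hu⟩))

theorem exists_sigmaEdge_lt_card_image_of_wide (hσ : ∀ x ∈ σ, 0 < x ∧ x ≤ q) (hδ : δ ∈ σ) (hsum : β + δ ≤ σ.sum) (hσ2 : 2 ≤ Multiset.card σ)
    (hW : ∀ C ∈ W, β ≤ #(univ.image (curry c C))) (hWcard : Multiset.card σ ≤ #W)
    (hU : #(univ.image c) = β + 1) :
    ∃ K, sigmaEdge n q σ K ∧ β < #(K.image c) := by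
  obtain ⟨C₁, hC₁⟩ : W.Nonempty := card_pos.1 (by omega)
  have hC₁U : univ.image (curry c C₁) ⊆ univ.image c := fun x hx => by
    obtain ⟨j, -, rfl⟩ := mem_image.1 hx
    exact mem_image_of_mem c (mem_univ _)
  obtain ⟨z, hzU, hz⟩ : ∃ z ∈ univ.image c,
      (univ.image c).erase z ⊆ univ.image (curry c C₁) := by
    by_cases hsub : univ.image c ⊆ univ.image (curry c C₁)
    · obtain ⟨z, hz⟩ := card_pos.1 (by omega : 0 < #(univ.image c))
      exact ⟨z, hz, (erase_subset _ _).trans hsub⟩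
    · obtain ⟨z, hzU, hzC⟩ := not_subset.1 hsub
      refine ⟨z, hzU, (eq_of_subset_of_card_le (subset_erase.2 ⟨hC₁U, hzC⟩) ?_).superset⟩
      rw [card_erase_of_mem hzU, hU]
      exact hW C₁ hC₁
  by_cases h : ∃ C₂ ∈ W, C₂ ≠ C₁ ∧ z ∈ univ.image (curry c C₂)
  · obtain ⟨C₂, hC₂, hne, hzC₂⟩ := h
    exact exists_sigmaEdge_lt_card_image_of_erase_subset hσ hδ hsum hσ2 hW hWcard
      (by omega) hC₂ hne hzC₂ hz
  simp only [not_exists, not_and] at h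
  by_cases hzC₁ : z ∈ univ.image (curry c C₁)
  · exact exists_sigmaEdge_lt_card_image_of_not_mem_wide hσ hδ hsum hW hWcard hzC₁ h
  · obtain ⟨v, -, rfl⟩ := mem_image.1 hzU
    refine exists_sigmaEdge_lt_card_image_of_not_mem_wide hσ hδ hsum hW hWcard
      (D := v.1) (z := c v) (mem_image.2 ⟨v.2, mem_univ _, rfl⟩) fun C hC _ => ?_
    by_cases hCC₁ : C = C₁
    · exact hCC₁ ▸ hzC₁
    · exact h C hC hCC₁

end WideClasses

theorem card_le_choose_mul_of_forall_not_isSpread {n q α β Δ : ℕ} {σ : Multiset ℕ} {c : Fin n × Fin q → ℕ}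
    (hcol : isABColouring n q σ α β c) (hα : 0 < α) (hσ0 : 0 ∉ σ) (hΔ : ∀ x ∈ σ, x ≤ Δ)
    (hαU : α - 1 ≤ #(univ.image c)) {N : Finset (Fin n)}
    (hN : ∀ C ∈ N, ¬ IsSpread (curry c C) (α - 1) (Δ - 1)) :
    #N ≤ (#(univ.image c)).choose (α - 1) * (Multiset.card σ - 1) := by
  by_contra! hlt
  have hS : ∀ C ∈ N,
      ∃ S ∈ (univ.image c).powersetCard (α - 1), Δ - 1 < #{j | curry c C j ∈ S} :=
    fun C hC => exists_mem_powersetCard_of_not_isSpread (hN C hC)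
      (fun j => mem_image_of_mem c (mem_univ _)) hαU
  choose! F hFU hF using hS
  obtain ⟨S₀, hS₀, hfib⟩ := exists_lt_card_fiber_of_mul_lt_card_of_maps_to hFU
    (by rwa [card_powersetCard])
  obtain ⟨T, hT, hTcard⟩ :=
    exists_subset_card_eq (s := {C ∈ N | F C = S₀}) (n := Multiset.card σ) (by omega)
  obtain ⟨K, hK, hKT⟩ := exists_sigmaEdge_subset (fun C => {j | curry c C j ∈ S₀}) σ hσ0 T hTcard
    fun C hC p hp => by
      obtain ⟨hCN, hFC⟩ := mem_filter.1 (hT hC)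
      have := hF C hCN
      rw [hFC] at this
      have := hΔ p hp
      omega
  have hKS : K.image c ⊆ S₀ := fun x hx => by
    obtain ⟨v, hv, rfl⟩ := mem_image.1 hx
    simpa using (mem_filter.1 (hKT v hv).2).2
  have := (hcol K hK).1
  have := card_le_card hKS
  have := (mem_powersetCard.1 hS₀).2
  omega

theorem not_exists_isABColouring_usesExactly_succ {n r q α β Δ δ : ℕ} {σ : Multiset ℕ}
    (hpart : IsPartitionOf σ r) (hΔmax : ∀ x ∈ σ, x ≤ Δ) (hδmem : δ ∈ σ) (hα : 2 ≤ α)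
    (hΔα : α ≤ Δ) (hδβ : δ ≤ r - β) (hαs : α ≤ Multiset.card σ) (hsβ : Multiset.card σ ≤ β)
    (hq : q = (β - α + 1) * ((Δ - 1) / (α - 1)) + Δ - 1)
    (hn : (β + 1).choose (α - 1) * (Multiset.card σ - 1) + Multiset.card σ ≤ n) :
    ¬ ∃ c : Fin n × Fin q → ℕ, isABColouring n q σ α β c ∧ usesExactly n q (β + 1) c := by
  rintro ⟨c, hcol, hU⟩
  classical
  unfold usesExactly at hU
  obtain ⟨hsum, hσ0⟩ := hpart
  have hσpos : ∀ x ∈ σ, 0 < x := fun x hx => Nat.pos_of_ne_zero (ne_of_mem_of_not_mem hx hσ0)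
  have hδ0 := hσpos δ hδmem
  have hΔq : Δ ≤ q := by
    have : 0 < (Δ - 1) / (α - 1) := Nat.div_pos (by omega) (by omega)
    have : 0 < (β - α + 1) * ((Δ - 1) / (α - 1)) := Nat.mul_pos (by omega) this
    omega
  have hWcard : Multiset.card σ ≤ #{C | IsSpread (curry c C) (α - 1) (Δ - 1)} := by
    have h1 := card_le_choose_mul_of_forall_not_isSpread hcol (by omega) hσ0 hΔmax (by omega)
      (N := {C | ¬ IsSpread (curry c C) (α - 1) (Δ - 1)}) fun C hC => (mem_filter.1 hC).2
    have h2 := card_filter_add_card_filter_not (s := univ)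
      fun C : Fin n => IsSpread (curry c C) (α - 1) (Δ - 1)
    rw [hU] at h1
    rw [card_univ, Fintype.card_fin] at h2
    omega
  have hW : ∀ C ∈ ({C | IsSpread (curry c C) (α - 1) (Δ - 1)} : Finset (Fin n)),
      β ≤ #(univ.image (curry c C)) := fun C hC =>
    IsSpread.le_card_image (mem_filter.1 hC).2 hα hΔα (by rw [Fintype.card_fin, hq])
  obtain ⟨K, hK, hβK⟩ := exists_sigmaEdge_lt_card_image_of_wide
    (fun x hx => ⟨hσpos x hx, (hΔmax x hx).trans hΔq⟩) hδmem (by omega) (by omega) hW hWcard hU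
  exact (hcol K hK).2.not_gt hβK

def cyclicColouring (e k j : ℕ) : ℕ :=
  if j < e then 0 else (j - e) % k

section Cyclic

variable {N e k L : ℕ}

theorem card_filter_cyclicColouring_mem_le (hN : N ≤ e + k * L) (S : Finset ℕ) :
    #{j : Fin N | cyclicColouring e k j ∈ S} ≤ #S * L + e := by
  have hsub : univ.filter (fun j : Fin N => cyclicColouring e k j ∈ S)
      ⊆ univ.filter (fun j : Fin N => (j : ℕ) < e) ∪
        S.biUnion fun x => {j : Fin N | e ≤ j ∧ (j - e) % k = x} := by
    intro j hj
    simp only [mem_union, mem_filter, mem_univ, true_and, mem_biUnion] at hj ⊢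
    unfold cyclicColouring at hj
    split_ifs at hj with h
    · exact Or.inl h
    · exact Or.inr ⟨_, hj, le_of_not_gt h, rfl⟩
  have hres : ∀ x, #{j : Fin N | e ≤ j ∧ (j - e) % k = x} ≤ L := fun x => by
    simpa using card_le_card_of_injOn (t := range L) (fun j : Fin N => (j - e) / k)
      (fun j hj => by
        simp only [coe_filter, mem_univ, true_and, Set.mem_ofPred_eq] at hj
        simp only [coe_range, Set.mem_Iio]
        exact Nat.div_lt_of_lt_mul (by omega))
      (fun i hi j hj hij => by
        simp only [coe_filter, mem_univ, true_and, Set.mem_ofPred_eq] at hi hj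
        have := Nat.div_add_mod ((i : ℕ) - e) k
        have := Nat.div_add_mod ((j : ℕ) - e) k
        simp only at hij
        ext
        rw [hij, hi.2, ← hj.2] at *
        omega)
  calc #{j : Fin N | cyclicColouring e k j ∈ S}
      ≤ #{j : Fin N | (j : ℕ) < e} + ∑ x ∈ S, #{j : Fin N | e ≤ j ∧ (j - e) % k = x} :=
        (card_le_card hsub).trans
          ((card_union_le _ _).trans (Nat.add_le_add_left card_biUnion_le _))
    _ ≤ e + #S * L := add_le_add (by rw [Fin.card_filter_val_lt]; omega)
        (sum_le_card_nsmul _ _ _ fun x _ => hres x)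
    _ = #S * L + e := add_comm _ _

theorem lt_card_image_cyclicColouring (hN : N ≤ e + k * L) {a : ℕ} {A : Finset (Fin N)}
    (hA : a * L + e < #A) : a < #(A.image fun j : Fin N => cyclicColouring e k j) := by
  by_contra! h
  have hsub : A ⊆ univ.filter
      fun j : Fin N => cyclicColouring e k j ∈ A.image fun j : Fin N => cyclicColouring e k j :=
    fun j hj => mem_filter.2 ⟨mem_univ _, mem_image_of_mem _ hj⟩
  have := (card_le_card hsub).trans (card_filter_cyclicColouring_mem_le hN _)
  have := Nat.mul_le_mul_right L h
  omega

theorem cyclicColouring_lt (hk : 0 < k) (j : ℕ) : cyclicColouring e k j < k := by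
  unfold cyclicColouring
  split_ifs
  exacts [hk, Nat.mod_lt _ hk]

theorem image_cyclicColouring (hk : 0 < k) (hN : e + k ≤ N) :
    univ.image (fun j : Fin N => cyclicColouring e k j) = range k := by
  refine Subset.antisymm (fun x hx => ?_) fun x hx => ?_
  · obtain ⟨j, -, rfl⟩ := mem_image.1 hx
    exact mem_range.2 (cyclicColouring_lt hk j)
  · have hx := mem_range.1 hx
    refine mem_image.2 ⟨⟨e + x, by omega⟩, mem_univ _, ?_⟩
    simp [cyclicColouring, Nat.mod_eq_of_lt hx]

end Cyclic

theorem exists_isABColouring_usesExactly {n q α β Δ : ℕ} {σ : Multiset ℕ} (hΔ : Δ ∈ σ)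
    (hα : 2 ≤ α) (hΔα : α ≤ Δ) (hαβ : α ≤ β) (hn : 0 < n)
    (hq : q = (β - α + 1) * ((Δ - 1) / (α - 1)) + Δ - 1) :
    ∃ c : Fin n × Fin q → ℕ, isABColouring n q σ α β c ∧ usesExactly n q β c := by
  set t := (Δ - 1) / (α - 1)
  have ht : 0 < t := Nat.div_pos (by omega) (by omega)
  have htΔ : (α - 1) * t ≤ Δ - 1 := Nat.mul_div_le (Δ - 1) (α - 1)
  set e := Δ - 1 - (α - 1) * t
  have hqe : q = e + β * t := by
    have : β * t = (β - α + 1) * t + (α - 1) * t := by rw [← add_mul]; congr 1; omega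
    omega
  have hβt : β ≤ β * t := Nat.le_mul_of_pos_right β ht
  refine ⟨fun v => cyclicColouring e β v.2, fun K hK => ⟨?_, ?_⟩, ?_⟩
  · obtain ⟨i, hi⟩ := hK.exists_card_filter_eq hΔ
    have hinj : Set.InjOn Prod.snd (↑(K.filter fun v => v.1 = i) : Set (Fin n × Fin q)) :=
      fun v hv w hw h => by
        simp only [mem_coe, mem_filter] at hv hw
        exact Prod.ext (hv.2.trans hw.2.symm) h
    calc α = α - 1 + 1 := by omega
      _ ≤ #(({v ∈ K | v.1 = i}.image Prod.snd).image fun j : Fin q => cyclicColouring e β j) :=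
          lt_card_image_cyclicColouring (a := α - 1) hqe.le
            (by rw [card_image_of_injOn hinj, hi]; omega)
      _ = #({v ∈ K | v.1 = i}.image fun v => cyclicColouring e β v.2) := by rw [image_image]; rfl
      _ ≤ #(K.image fun v => cyclicColouring e β v.2) :=
          card_le_card (image_subset_image (filter_subset _ _))
  · calc #(K.image fun v => cyclicColouring e β v.2) ≤ #(range β) :=
          card_le_card fun x hx => by
            obtain ⟨v, -, rfl⟩ := mem_image.1 hx
            exact mem_range.2 (cyclicColouring_lt (by omega) _)
      _ = β := card_range β
  · have : Nonempty (Fin n) := ⟨⟨0, hn⟩⟩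
    have himg : (univ : Finset (Fin n × Fin q)).image (fun v => cyclicColouring e β v.2)
        = univ.image fun j : Fin q => cyclicColouring e β j := by
      ext; simp
    rw [usesExactly, himg, image_cyclicColouring (by omega) (by omega), card_range]

theorem exists_isABColouring_usesExactly_of_le {n q α β k L ρ : ℕ} {σ : Multiset ℕ}
    (hL : 0 < L) (hLρ : (α - 1) * L + ρ < Multiset.card σ) (hsβ : Multiset.card σ ≤ β)
    (hq : 0 < q) (hk : 0 < k) (hθk : (n - ρ + L - 1) / L ≤ k) (hkn : k ≤ n) :
    ∃ c : Fin n × Fin q → ℕ, isABColouring n q σ α β c ∧ usesExactly n q k c := by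
  have hnk : n - ρ ≤ k * L := by
    rw [Nat.div_le_iff_le_mul_add_pred hL] at hθk
    rw [mul_comm]
    omega
  have hkL : k ≤ k * L := Nat.le_mul_of_pos_right k hL
  set e := n - k * L
  refine ⟨fun v => cyclicColouring e k v.1, fun K hK => ?_, ?_⟩
  · have hP := hK.card_image_fst
    have himg : K.image (fun v => cyclicColouring e k v.1)
        = (K.image Prod.fst).image fun i : Fin n => cyclicColouring e k i := by
      rw [image_image]
      rfl
    rw [himg]
    refine ⟨?_, card_image_le.trans (hP ▸ hsβ)⟩
    have := lt_card_image_cyclicColouring (a := α - 1) (show n ≤ e + k * L by omega)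
      (A := K.image Prod.fst) (by rw [hP]; omega)
    omega
  · have : Nonempty (Fin q) := ⟨⟨0, hq⟩⟩
    have himg : (univ : Finset (Fin n × Fin q)).image (fun v => cyclicColouring e k v.1)
        = univ.image fun i : Fin n => cyclicColouring e k i := by
      ext; simp
    rw [usesExactly, himg, image_cyclicColouring hk (by omega), card_range]

theorem Nat.add_one_le_choose_add_one {n k : ℕ} (hk : 0 < k) (hkn : k ≤ n) :
    n + 1 ≤ (n + 1).choose k := by
  obtain ⟨j, rfl⟩ : ∃ j, k = j + 1 := ⟨k - 1, by omega⟩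
  have h : j + 1 ≤ n.choose j :=
    (Nat.choose_succ_self_right j).symm.le.trans (Nat.choose_le_choose j hkn)
  refine Nat.le_of_mul_le_mul_right ?_ (Nat.succ_pos j)
  rw [← Nat.add_one_mul_choose_eq]
  exact Nat.mul_le_mul_left _ h

theorem add_one_lt_div_of_choose_mul_le {n α β s L ρ : ℕ} (hα : 2 ≤ α) (hαβ : α ≤ β + 1)
    (hL : 0 < L) (hLρ : (α - 1) * L + ρ < s) (hn : (β + 1).choose (α - 1) * (s - 1) + s ≤ n) :
    β + 1 < (n - ρ + L - 1) / L := by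
  have hC := Nat.add_one_le_choose_add_one (n := β) (k := α - 1) (by omega) (by omega)
  have hLs : L ≤ (α - 1) * L := Nat.le_mul_of_pos_left L (by omega)
  have h1 : (β + 1) * L ≤ (β + 1) * (s - 1) := Nat.mul_le_mul_left _ (by omega)
  have h2 : (β + 1) * (s - 1) ≤ (β + 1).choose (α - 1) * (s - 1) := Nat.mul_le_mul_right _ hC
  rw [Nat.lt_iff_add_one_le, Nat.le_div_iff_mul_le hL, add_mul, one_mul]
  omega

theorem stmt17_general (n r q α β Δ δ : ℕ) (σ : Multiset ℕ)
    (hpart : IsPartitionOf σ r)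
    (hΔmem : Δ ∈ σ) (hΔmax : ∀ x ∈ σ, x ≤ Δ)
    (hδmem : δ ∈ σ)
    (hα : 2 ≤ α) (hΔα : α ≤ Δ) (hδβ : δ ≤ r - β)
    (hαs : α ≤ σ.card) (hsβ : σ.card ≤ β)
    (hq : q = (β - α + 1) * ((Δ - 1) / (α - 1)) + Δ - 1)
    (hn : (β + 1).choose (α - 1) * (σ.card - 1) + σ.card ≤ n) :
    (∃ c : Fin n × Fin q → ℕ, isABColouring n q σ α β c ∧ usesExactly n q β c) ∧
    (¬ ∃ c : Fin n × Fin q → ℕ, isABColouring n q σ α β c ∧ usesExactly n q (β + 1) c) ∧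
    (∀ k : ℕ,
        (n - (σ.card - 1 - (α - 1) * ((σ.card - 1) / (α - 1)))
            + ((σ.card - 1) / (α - 1)) - 1) / ((σ.card - 1) / (α - 1)) ≤ k → k ≤ n →
        ∃ c : Fin n × Fin q → ℕ, isABColouring n q σ α β c ∧ usesExactly n q k c) ∧
    β + 1 < (n - (σ.card - 1 - (α - 1) * ((σ.card - 1) / (α - 1)))
        + ((σ.card - 1) / (α - 1)) - 1) / ((σ.card - 1) / (α - 1)) := by
  have hL : 0 < (σ.card - 1) / (α - 1) := Nat.div_pos (by omega) (by omega)
  have hLρ : (α - 1) * ((σ.card - 1) / (α - 1))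
      + (σ.card - 1 - (α - 1) * ((σ.card - 1) / (α - 1))) < σ.card := by
    have := Nat.mul_div_le (σ.card - 1) (α - 1)
    omega
  have hgap := add_one_lt_div_of_choose_mul_le hα (by omega) hL hLρ hn
  exact ⟨exists_isABColouring_usesExactly hΔmem hα hΔα (hαs.trans hsβ) (by omega) hq,
    not_exists_isABColouring_usesExactly_succ hpart hΔmax hδmem hα hΔα hδβ hαs hsβ hq hn,
    fun k hk hkn =>
      exists_isABColouring_usesExactly_of_le hL hLρ hsβ (by omega) (by omega) hk hkn, hgap⟩

theorem stmt17 (n r q α β Δ δ : ℕ) (σ : Multiset ℕ)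
    (hpart : IsPartitionOf σ r)
    (hΔmem : Δ ∈ σ) (hΔmax : ∀ x ∈ σ, x ≤ Δ)
    (hδmem : δ ∈ σ) (hδmin : ∀ x ∈ σ, δ ≤ x)
    (hα : 2 ≤ α) (hΔα : α ≤ Δ) (hδβ : δ ≤ r - β)
    (hαs : α ≤ σ.card) (hsβ : σ.card ≤ β)
    (hq : q = (β - α + 1) * ((Δ - 1) / (α - 1)) + Δ - 1)
    (hn : (β + 1).choose (α - 1) * (σ.card - 1) + σ.card ≤ n) :
    (∃ c : Fin n × Fin q → ℕ, isABColouring n q σ α β c ∧ usesExactly n q β c) ∧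
    (¬ ∃ c : Fin n × Fin q → ℕ, isABColouring n q σ α β c ∧ usesExactly n q (β + 1) c) ∧
    (∀ k : ℕ,
        (n - (σ.card - 1 - (α - 1) * ((σ.card - 1) / (α - 1)))
            + ((σ.card - 1) / (α - 1)) - 1) / ((σ.card - 1) / (α - 1)) ≤ k → k ≤ n →
        ∃ c : Fin n × Fin q → ℕ, isABColouring n q σ α β c ∧ usesExactly n q k c) ∧
    β + 1 < (n - (σ.card - 1 - (α - 1) * ((σ.card - 1) / (α - 1)))
        + ((σ.card - 1) / (α - 1)) - 1) / ((σ.card - 1) / (α - 1)) :=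
  stmt17_general n r q α β Δ δ σ hpart hΔmem hΔmax hδmem hα hΔα hδβ hαs hsβ hq hn
end
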